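/- arXiv:2403.12355 — 4 statements merged into one kernel-verified Lean document; each statement's English description precedes it below -/
import Mathlib

section
/- Let G be a finite nilpotent group of nilpotency class L generated by a symmetric set S ⊆ G, and let R ⊆ S contain exactly one element of {s, s⁻¹} for each s ∈ S. Fix an integer i with 2 ≤ i ≤ L. Then for every integer m with 1 ≤ m ≤ Diam_S(G_ab), every s ∈ S and all x₂, …, x_i ∈ R, the least n for which there exist u ∈ G_{i+1} and a product w of n elements of S with ρ(s^m, x₂, …, x_i) = w·u satisfies (as real numbers) n ≤ 2^{5i+6}·( 2^{2i} + L·m^{1/i} ), where m^{1/i} is the real i-th root. -/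
open scoped BigOperators
open scoped Classical

noncomputable section

/-- A subset of a group is symmetric if it is closed under taking inverses. -/
def SymmSet {G : Type*} [Group G] (S : Set G) : Prop := ∀ s : G, s ∈ S ↔ s⁻¹ ∈ S

/-- The word length of `g` with respect to `S`: the least `n` such that `g` is a product
of a list of `n` elements of `S`. -/
def wordLength {G : Type*} [Group G] (S : Set G) (g : G) : ℕ :=
  sInf {n | ∃ l : List G, (∀ x ∈ l, x ∈ S) ∧ l.length = n ∧ l.prod = g}

/-- The diameter of a subset `H` of `G` in the Cayley graph of `G` w.r.t. `S`. -/
def setDiam {G : Type*} [Group G] (S H : Set G) : ℕ := sSup (wordLength S '' H)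

/-- `Diam_S(H/N)`: the least `D` such that every `h ∈ H` can be written as `h = w * u` with
`u ∈ N` and `w` a product of at most `D` elements of `S`. -/
def quotDiam {G : Type*} [Group G] (S H N : Set G) : ℕ :=
  sInf {D | ∀ h ∈ H, ∃ l : List G, (∀ x ∈ l, x ∈ S) ∧ l.length ≤ D ∧ ∃ u ∈ N, h = l.prod * u}

/-- `G` has rank `r`: `r` is the least `n` such that some set of `n` elements of `G`
together with their inverses generates `G`. -/
def HasRank (G : Type*) [Group G] (r : ℕ) : Prop :=
  IsLeast {n | ∃ T : Finset G, T.card = n ∧ Subgroup.closure ((T : Set G) ∪ (T : Set G)⁻¹) = ⊤} r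

/-- `G` is nilpotent of nilpotency class exactly `L`; with the paper's indexing
`G_i := lowerCentralSeries G (i-1)`, this says `G_{L+1} = {1} ≠ G_L`. -/
def NilpotencyClassEq (G : Type*) [Group G] (L : ℕ) : Prop :=
  Subgroup.lowerCentralSeries (⊤ : Subgroup G) L = ⊥ ∧ Subgroup.lowerCentralSeries (⊤ : Subgroup G) (L - 1) ≠ ⊥

/-- Transition matrix of the simple random walk on the Cayley graph `Cay(G,S)`. -/
def transMatrix {G : Type*} [Group G] [Fintype G] (S : Set G) : Matrix G G ℝ :=
  fun x y => if x⁻¹ * y ∈ S then ((S.ncard : ℝ))⁻¹ else 0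

/-- Heat kernel `P_t = exp (t (K - I))` of the simple random walk on `Cay(G,S)`. -/
def heatKernel {G : Type*} [Group G] [Fintype G] (S : Set G) (t : ℝ) : Matrix G G ℝ :=
  NormedSpace.exp (t • (transMatrix S - 1))

/-- Transition matrix of the projected walk on `G ⧸ N`. -/
def quotTransMatrix {G : Type*} [Group G] (S : Set G) (N : Subgroup G) [N.Normal] :
    Matrix (G ⧸ N) (G ⧸ N) ℝ :=
  fun C C' => (({s ∈ S | C * (QuotientGroup.mk s : G ⧸ N) = C'}).ncard : ℝ) / (S.ncard : ℝ)

/-- Heat kernel of the projected walk on `G ⧸ N`. -/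
def quotHeatKernel {G : Type*} [Group G] [Fintype G] (S : Set G) (N : Subgroup G) [N.Normal]
    (t : ℝ) : Matrix (G ⧸ N) (G ⧸ N) ℝ :=
  letI : Fintype (G ⧸ N) := Fintype.ofFinite _
  NormedSpace.exp (t • (quotTransMatrix S N - 1))

/-- `ε`-mixing time of the simple random walk on `Cay(G,S)` started at the identity. -/
def mixingTime {G : Type*} [Group G] [Fintype G] (S : Set G) (ε : ℝ) : ℝ :=
  sInf {t : ℝ | 0 ≤ t ∧ (∑ y : G, |heatKernel S t 1 y - (Fintype.card G : ℝ)⁻¹|) / 2 ≤ ε}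

/-- `ε`-mixing time of the projected walk on `G ⧸ N` started at the identity coset. -/
def quotMixingTime {G : Type*} [Group G] [Fintype G] (S : Set G) (N : Subgroup G) [N.Normal]
    (ε : ℝ) : ℝ :=
  letI : Fintype (G ⧸ N) := Fintype.ofFinite _
  sInf {t : ℝ | 0 ≤ t ∧
    (∑ C : G ⧸ N, |quotHeatKernel S N t 1 C - (Nat.card (G ⧸ N) : ℝ)⁻¹|) / 2 ≤ ε}

/-- Second-largest eigenvalue of a symmetric stochastic matrix, via the variational
characterization over mean-zero functions. -/
def secondEig {X : Type*} [Fintype X] (K : Matrix X X ℝ) : ℝ :=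
  sSup {r : ℝ | ∃ f : X → ℝ, f ≠ 0 ∧ (∑ x, f x) = 0 ∧
    r = (∑ x, ∑ y, f x * K x y * f y) / (∑ x, (f x) ^ 2)}

/-- Relaxation time `1/(1-λ)`. -/
def relaxTime {X : Type*} [Fintype X] (K : Matrix X X ℝ) : ℝ := 1 / (1 - secondEig K)

/-- Relaxation time of the projected walk on `G ⧸ N`. -/
def quotRelaxTime {G : Type*} [Group G] [Fintype G] (S : Set G) (N : Subgroup G) [N.Normal] : ℝ :=
  letI : Fintype (G ⧸ N) := Fintype.ofFinite _
  relaxTime (quotTransMatrix S N)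

/-- The paper's commutator `[x,y] = x⁻¹ y⁻¹ x y`. -/
def pcomm {G : Type*} [Group G] (x y : G) : G := x⁻¹ * y⁻¹ * x * y

/-- Iterated commutator `ρ(x, y₁, …, y_k) = [⋯[[x,y₁],y₂]⋯, y_k]`. -/
def rho {G : Type*} [Group G] (x : G) (l : List G) : G := l.foldl pcomm x

/-- Word length in `G` modulo `N`: the least `n` such that `g = w * u` with `u ∈ N` and
`w` a product of `n` elements of `S`. -/
def quotLength {G : Type*} [Group G] (S N : Set G) (g : G) : ℕ :=
  sInf {n | ∃ l : List G, (∀ x ∈ l, x ∈ S) ∧ l.length = n ∧ ∃ u ∈ N, g = l.prod * u}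

/-!
Modulo `G_{i+1}` the iterated commutator `ρ(·, x₂, …, x_i)` is multiplicative in every argument,
because each commutator identity holds up to a factor lying one step deeper in the lower central
series; in particular `ρ(s^m, x) ≡ ρ(s, x)^m`. Put `k = ⌊m^{1/i}⌋ + 1`, so that `m < k^i`, and
write `m = ∑_{j<i} d_j k^j` in base `k`. Then
`ρ(s, x)^{d_j k^j} ≡ ρ(s^{d_j}, x₂^k, …, x_{j+1}^k, x_{j+2}, …, x_i)`, a word of length at most
`3 · 2^{i-1} k`, and the product of these `i` words represents `ρ(s^m, x)` modulo `G_{i+1}`.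
-/

open scoped Pointwise

-- `insert 1 S ^ b` is the ball of radius `b` about `1` in the Cayley graph of `S`.
theorem exists_list_of_mem_insert_one_pow {M : Type*} [Monoid M] {S : Set M} {b : ℕ} {g : M}
    (hg : g ∈ insert 1 S ^ b) : ∃ l : List M, (∀ x ∈ l, x ∈ S) ∧ l.length ≤ b ∧ l.prod = g := by
  induction b generalizing g with
  | zero => exact ⟨[], by simp, le_rfl, by simpa [eq_comm] using hg⟩
  | succ b ih =>
    rw [pow_succ] at hg
    obtain ⟨a, ha, t, ht, rfl⟩ := hg
    obtain ⟨l, hlS, hlen, rfl⟩ := ih ha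
    rcases ht with rfl | ht
    · exact ⟨l, hlS, by omega, by simp⟩
    · refine ⟨l ++ [t], ?_, by simpa using hlen, by simp⟩
      simpa [or_imp, forall_and] using ⟨hlS, ht⟩

section IteratedCommutator

variable {G : Type*} [Group G] {S : Set G}

theorem rho_cons (a c : G) (l : List G) : rho a (c :: l) = rho (pcomm a c) l := rfl

theorem map_pcomm {H : Type*} [Group H] (f : G →* H) (a b : G) :
    f (pcomm a b) = pcomm (f a) (f b) := by
  simp only [pcomm, map_mul, map_inv]

theorem quotLength_le_of_mem_insert_one_pow {N : Subgroup G} {b : ℕ} {w g : G}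
    (hw : w ∈ insert 1 S ^ b) (h : (w : G ⧸ N) = g) : quotLength S N g ≤ b := by
  obtain ⟨l, hlS, hlen, rfl⟩ := exists_list_of_mem_insert_one_pow hw
  refine le_trans (Nat.sInf_le ?_) hlen
  exact ⟨l, hlS, rfl, _, QuotientGroup.eq.1 h, by group⟩

theorem inv_mem_insert_one_pow (hS : SymmSet S) {b : ℕ} {a : G} (ha : a ∈ insert 1 S ^ b) :
    a⁻¹ ∈ insert 1 S ^ b := by
  have hT : (insert 1 S)⁻¹ = insert (1 : G) S := by
    ext g
    simp [hS g]
  rw [← hT, inv_pow]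
  exact Set.inv_mem_inv.2 ha

theorem pcomm_mem_insert_one_pow (hS : SymmSet S) {b q : ℕ} {a c : G}
    (ha : a ∈ insert 1 S ^ b) (hc : c ∈ insert 1 S ^ q) :
    pcomm a c ∈ insert 1 S ^ (2 * b + 2 * q) := by
  have h := Set.mul_mem_mul (Set.mul_mem_mul (Set.mul_mem_mul
    (inv_mem_insert_one_pow hS ha) (inv_mem_insert_one_pow hS hc)) ha) hc
  rwa [← pow_add, ← pow_add, ← pow_add, show b + q + b + q = 2 * b + 2 * q by ring] at h

theorem rho_mem_insert_one_pow (hS : SymmSet S) {b q : ℕ} {a : G} {l : List G}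
    (ha : a ∈ insert 1 S ^ b) (hl : ∀ c ∈ l, c ∈ insert 1 S ^ q) :
    rho a l ∈ insert 1 S ^ (2 ^ l.length * (b + 2 * q)) := by
  induction l generalizing a b with
  | nil => exact Set.pow_subset_pow_right (Set.mem_insert 1 S) (by simp) ha
  | cons c l ih =>
    have h := ih (pcomm_mem_insert_one_pow hS ha (hl c List.mem_cons_self))
      fun d hd => hl d (List.mem_cons_of_mem c hd)
    rwa [List.length_cons, pow_succ, show 2 ^ l.length * 2 * (b + 2 * q) =
      2 ^ l.length * (2 * b + 2 * q + 2 * q) by ring]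

theorem pcomm_mul_left (a b c : G) : pcomm (a * b) c = b⁻¹ * pcomm a c * b * pcomm b c := by
  simp only [pcomm]; group

theorem pcomm_mul_right (a b c : G) : pcomm a (b * c) = pcomm a c * (c⁻¹ * pcomm a b * c) := by
  simp only [pcomm]; group

theorem inv_mul_mul_of_mem_center {z : G} (hz : z ∈ Subgroup.center G) (g : G) :
    g⁻¹ * z * g = z := by
  rw [mul_assoc, ← Subgroup.mem_center_iff.1 hz g, inv_mul_cancel_left]

theorem pcomm_mul_of_mem_center (a c : G) {w : G} (hw : w ∈ Subgroup.center G) :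
    pcomm (a * w) c = pcomm a c := by
  have hwc : pcomm w c = 1 := by
    rw [pcomm, mul_assoc w⁻¹, Subgroup.mem_center_iff.1 hw c⁻¹]; group
  rw [pcomm_mul_left, hwc, mul_one, mul_assoc, Subgroup.mem_center_iff.1 hw, inv_mul_cancel_left]

theorem pcomm_pow_left_of_mem_center {u y : G} (h : pcomm u y ∈ Subgroup.center G) (c : ℕ) :
    pcomm (u ^ c) y = pcomm u y ^ c := by
  induction c with
  | zero => simp [pcomm]
  | succ c ih =>
    rw [pow_succ, pcomm_mul_left, ih, inv_mul_mul_of_mem_center (pow_mem h c), pow_succ]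

theorem pcomm_pow_right_of_mem_center {u y : G} (h : pcomm u y ∈ Subgroup.center G) (e : ℕ) :
    pcomm u (y ^ e) = pcomm u y ^ e := by
  induction e with
  | zero => simp [pcomm]
  | succ e ih =>
    rw [pow_succ, pcomm_mul_right, ih, inv_mul_mul_of_mem_center (pow_mem h e), pow_succ']

theorem pcomm_pow_pow_of_mem_center {u y : G} (h : pcomm u y ∈ Subgroup.center G) (c e : ℕ) :
    pcomm (u ^ c) (y ^ e) = pcomm u y ^ (c * e) := by
  have he : pcomm u (y ^ e) ∈ Subgroup.center G := by
    rw [pcomm_pow_right_of_mem_center h]; exact pow_mem h e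
  rw [pcomm_pow_left_of_mem_center he, pcomm_pow_right_of_mem_center h, ← pow_mul, mul_comm]

-- Mathlib indexes the lower central series from `0`: `γ n` is the paper's `G_{n+1}`.
local notation "γ" => Subgroup.lowerCentralSeries (⊤ : Subgroup G)

open scoped commutatorElement in
theorem pcomm_mem_lowerCentralSeries_succ {n : ℕ} {w : G} (hw : w ∈ γ n) (g : G) :
    pcomm w g ∈ γ (n + 1) := by
  have h : pcomm w g = ⁅w⁻¹, g⁻¹⁆ := by simp only [pcomm, commutatorElement_def, inv_inv]
  rw [h]
  exact Subgroup.lowerCentralSeries_isDescendingCentralSeries.2 _ n (inv_mem hw) _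

theorem mk_mem_center_of_mem_lowerCentralSeries {n : ℕ} {w : G} (hw : w ∈ γ n) :
    (w : G ⧸ γ (n + 1)) ∈ Subgroup.center (G ⧸ γ (n + 1)) := by
  refine Subgroup.mem_center_iff.2 fun g => ?_
  induction g using QuotientGroup.induction_on with | H g => ?_
  rw [← QuotientGroup.mk_mul, ← QuotientGroup.mk_mul, QuotientGroup.eq]
  convert pcomm_mem_lowerCentralSeries_succ hw g using 1
  simp only [pcomm]; group

theorem mk_pcomm_eq_of_mk_eq {r : ℕ} {a b : G} (h : (a : G ⧸ γ r) = b) (c : G) :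
    ((pcomm a c : G) : G ⧸ γ (r + 1)) = (pcomm b c : G) := by
  obtain ⟨w, hw, rfl⟩ : ∃ w ∈ γ r, a = b * w := ⟨b⁻¹ * a, QuotientGroup.eq.1 h.symm, by group⟩
  simp only [← QuotientGroup.mk'_apply, map_pcomm, map_mul]
  exact pcomm_mul_of_mem_center _ _ (mk_mem_center_of_mem_lowerCentralSeries hw)

theorem mk_rho_eq_of_mk_eq {r : ℕ} {a b : G} (h : (a : G ⧸ γ r) = b) (l : List G) :
    ((rho a l : G) : G ⧸ γ (r + l.length)) = (rho b l : G) := by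
  induction l generalizing r a b with
  | nil => exact h
  | cons c l ih =>
    rw [rho_cons, rho_cons, List.length_cons, ← add_assoc, add_right_comm]
    exact ih (mk_pcomm_eq_of_mk_eq h c)

theorem mk_pcomm_pow_pow {t : ℕ} {u : G} (hu : u ∈ γ t) (y : G) (c e : ℕ) :
    ((pcomm (u ^ c) (y ^ e) : G) : G ⧸ γ (t + 2)) = (pcomm u y ^ (c * e) : G) := by
  have hz := mk_mem_center_of_mem_lowerCentralSeries (pcomm_mem_lowerCentralSeries_succ hu y)
  simp only [← QuotientGroup.mk'_apply, map_pcomm, map_pow] at hz ⊢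
  exact pcomm_pow_pow_of_mem_center hz c e

theorem mk_rho_pow {t : ℕ} {u : G} (hu : u ∈ γ t) (c : ℕ) (l : List (G × ℕ)) :
    ((rho (u ^ c) (l.map fun p => p.1 ^ p.2) : G) : G ⧸ γ (t + l.length + 1)) =
      (rho u (l.map Prod.fst) ^ (c * (l.map Prod.snd).prod) : G) := by
  induction l generalizing t u c with
  | nil => simp [rho]
  | cons p l ih =>
    obtain ⟨y, e⟩ := p
    have h := mk_rho_eq_of_mk_eq (mk_pcomm_pow_pow hu y c e) (l.map fun p => p.1 ^ p.2)
    rw [List.length_map] at h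
    simp only [List.map_cons, rho_cons, List.prod_cons, List.length_cons, ← mul_assoc]
    rw [show t + (l.length + 1) + 1 = t + 2 + l.length by omega, h,
      show t + 2 + l.length = t + 1 + l.length + 1 by omega]
    exact ih (pcomm_mem_lowerCentralSeries_succ hu y) (c * e)

theorem mk_rho_pow_left {t : ℕ} {u : G} (hu : u ∈ γ t) (c : ℕ) (l : List G) :
    ((rho (u ^ c) l : G) : G ⧸ γ (t + l.length + 1)) = (rho u l ^ c : G) := by
  have h := mk_rho_pow hu c (l.map fun y => (y, 1))
  rw [List.length_map] at h
  simpa [Function.comp_def] using h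

theorem exists_mem_insert_one_pow_mk_eq_rho_pow_digit (hS : SymmSet S) {s : G} (hs : s ∈ S)
    {x : List G} (hx : ∀ y ∈ x, y ∈ S) {k d j : ℕ} (hk : 1 ≤ k) (hd : d ≤ k) (hj : j ≤ x.length) :
    ∃ g ∈ insert 1 S ^ (2 ^ x.length * (3 * k)),
      (g : G ⧸ γ (x.length + 1)) = (rho s x ^ (k ^ j * d) : G) := by
  set l : List (G × ℕ) := (x.take j).map (·, k) ++ (x.drop j).map (·, 1)
  have hl : ∀ p ∈ l, p.1 ∈ S ∧ p.2 ≤ k := by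
    simp only [l, List.mem_append, List.mem_map]
    rintro _ (⟨y, hy, rfl⟩ | ⟨y, hy, rfl⟩)
    exacts [⟨hx y (List.mem_of_mem_take hy), le_rfl⟩, ⟨hx y (List.mem_of_mem_drop hy), hk⟩]
  have hfst : l.map Prod.fst = x := by simp [l, Function.comp_def]
  have hsnd : (l.map Prod.snd).prod = k ^ j := by simp [l, Function.comp_def, hj]
  have hlen : l.length = x.length := by simp [l]; omega
  refine ⟨rho (s ^ d) (l.map fun p => p.1 ^ p.2), ?_, ?_⟩
  · have hpow (y : G) (hy : y ∈ S) (e : ℕ) (he : e ≤ k) : y ^ e ∈ insert 1 S ^ k :=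
      Set.pow_subset_pow_right (Set.mem_insert 1 S) he
        (Set.pow_mem_pow (Set.mem_insert_of_mem 1 hy))
    have h := rho_mem_insert_one_pow hS (hpow s hs d hd) (l := l.map fun p => p.1 ^ p.2) (by
      simp only [List.mem_map]
      rintro _ ⟨p, hp, rfl⟩
      exact hpow _ (hl p hp).1 _ (hl p hp).2)
    rwa [List.length_map, hlen, show k + 2 * k = 3 * k by ring] at h
  · have h := mk_rho_pow (t := 0) (Subgroup.mem_top s) d l
    rwa [hfst, hsnd, hlen, zero_add, mul_comm d] at h

theorem exists_mem_insert_one_pow_mk_eq_rho_pow_mod (hS : SymmSet S) {s : G} (hs : s ∈ S)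
    {x : List G} (hx : ∀ y ∈ x, y ∈ S) {k : ℕ} (hk : 1 ≤ k) (m : ℕ) {j : ℕ}
    (hj : j ≤ x.length + 1) :
    ∃ g ∈ insert 1 S ^ (j * (2 ^ x.length * (3 * k))),
      (g : G ⧸ γ (x.length + 1)) = (rho s x ^ (m % k ^ j) : G) := by
  induction j with
  | zero => exact ⟨1, by simp, by simp [Nat.mod_one]⟩
  | succ j ih =>
    obtain ⟨g, hg, hgq⟩ := ih (by omega)
    obtain ⟨g', hg', hg'q⟩ := exists_mem_insert_one_pow_mk_eq_rho_pow_digit hS hs hx hk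
      (Nat.mod_lt _ hk).le (show j ≤ x.length by omega) (d := m / k ^ j % k)
    refine ⟨g * g', by rw [Nat.succ_mul, pow_add]; exact Set.mul_mem_mul hg hg', ?_⟩
    rw [Nat.mod_pow_succ, pow_add, QuotientGroup.mk_mul, QuotientGroup.mk_mul, hgq, hg'q]

theorem quotLength_rho_pow_le (hS : SymmSet S) {s : G} (hs : s ∈ S) {x : List G}
    (hx : ∀ y ∈ x, y ∈ S) {k m : ℕ} (hm : m < k ^ (x.length + 1)) :
    quotLength S (γ (x.length + 1)) (rho (s ^ m) x) ≤
      (x.length + 1) * (2 ^ x.length * (3 * k)) := by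
  have hk : 1 ≤ k := Nat.one_le_iff_ne_zero.2 fun hk => by simp [hk] at hm
  obtain ⟨g, hg, hgq⟩ := exists_mem_insert_one_pow_mk_eq_rho_pow_mod hS hs hx hk m le_rfl
  refine quotLength_le_of_mem_insert_one_pow hg ?_
  have h := mk_rho_pow_left (t := 0) (Subgroup.mem_top s) m x
  rw [zero_add] at h
  rw [hgq, Nat.mod_eq_of_lt hm, h]

end IteratedCommutator

theorem lt_floor_rpow_one_div_add_one_pow (m : ℕ) {i : ℕ} (hi : i ≠ 0) :
    m < (⌊(m : ℝ) ^ ((1 : ℝ) / i)⌋₊ + 1) ^ i := by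
  have hroot : ((m : ℝ) ^ ((1 : ℝ) / i)) ^ i = m := by
    rw [one_div]; exact Real.rpow_inv_natCast_pow (Nat.cast_nonneg m) hi
  have h : (m : ℝ) < ((⌊(m : ℝ) ^ ((1 : ℝ) / i)⌋₊ + 1 : ℕ) : ℝ) ^ i :=
    calc (m : ℝ) = ((m : ℝ) ^ ((1 : ℝ) / i)) ^ i := hroot.symm
      _ < _ := by
        push_cast
        exact pow_lt_pow_left₀ (Nat.lt_floor_add_one _) (by positivity) hi
  exact_mod_cast h

theorem mul_two_pow_pred_mul_three_le (i : ℕ) : i * (2 ^ (i - 1) * 3) ≤ 2 ^ (5 * i + 6) :=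
  calc i * (2 ^ (i - 1) * 3) ≤ 2 ^ i * (2 ^ i * 2 ^ 2) := by
        gcongr <;> first | exact Nat.lt_two_pow_self.le | omega
    _ = 2 ^ (2 * i + 2) := by ring
    _ ≤ 2 ^ (5 * i + 6) := Nat.pow_le_pow_right two_pos (by omega)

theorem rho_power_quot_word_length_bound_general (G : Type*) [Group G] (L : ℕ)
    (S R : Set G) (hS : SymmSet S) (hRS : R ⊆ S)
    (i : ℕ) (hi2 : 2 ≤ i) (hiL : i ≤ L)
    (m : ℕ) (s : G) (hs : s ∈ S) (x : Fin (i - 1) → G) (hx : ∀ j, x j ∈ R) :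
    (quotLength S (Subgroup.lowerCentralSeries (⊤ : Subgroup G) i : Set G) (rho (s ^ m) (List.ofFn x)) : ℝ) ≤
      (2 : ℝ) ^ (5 * i + 6) * ((2 : ℝ) ^ (2 * i) + (L : ℝ) * (m : ℝ) ^ ((1 : ℝ) / i)) := by
  set r : ℝ := (m : ℝ) ^ ((1 : ℝ) / i)
  have hlen : (List.ofFn x).length + 1 = i := by simp; omega
  have hxS : ∀ y ∈ List.ofFn x, y ∈ S := by simpa [List.mem_ofFn] using fun j => hRS (hx j)
  have hword := quotLength_rho_pow_le hS hs hxS (k := ⌊r⌋₊ + 1)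
    (by rw [hlen]; exact lt_floor_rpow_one_div_add_one_pow m (by omega))
  rw [hlen, List.length_ofFn] at hword
  have hr : 0 ≤ r := by positivity
  have hk : ((⌊r⌋₊ + 1 : ℕ) : ℝ) ≤ r + 1 := by push_cast; linarith [Nat.floor_le hr]
  have hL : (1 : ℝ) ≤ L := by exact_mod_cast (by omega : 1 ≤ L)
  have h2i : (1 : ℝ) ≤ 2 ^ (2 * i) := one_le_pow₀ one_le_two
  calc (quotLength S (Subgroup.lowerCentralSeries (⊤ : Subgroup G) i : Set G)
        (rho (s ^ m) (List.ofFn x)) : ℝ)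
      ≤ ((i * (2 ^ (i - 1) * 3) : ℕ) : ℝ) * ((⌊r⌋₊ + 1 : ℕ) : ℝ) := by
        exact_mod_cast hword.trans_eq (by ring)
    _ ≤ 2 ^ (5 * i + 6) * (r + 1) := by
        gcongr; exact_mod_cast mul_two_pow_pred_mul_three_le i
    _ ≤ 2 ^ (5 * i + 6) * (2 ^ (2 * i) + L * r) := by
        gcongr 2 ^ (5 * i + 6) * ?_
        linarith [le_mul_of_one_le_left hr hL]

/-- Lemma `lemma_thm1`: for `2 ≤ i ≤ L`, `1 ≤ m ≤ Diam_S(G_ab)`, `s ∈ S` and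
`x₂,…,x_i ∈ R`, the word length of `ρ(s^m, x₂, …, x_i)` modulo `G_{i+1}` is at most
`2^{5i+6}(2^{2i} + L m^{1/i})`. -/
theorem rho_power_quot_word_length_bound (G : Type*) [Group G] [Fintype G] (L : ℕ)
    (hL : NilpotencyClassEq G L) (S R : Set G) (hS : SymmSet S)
    (hgen : Subgroup.closure S = ⊤) (hRS : R ⊆ S)
    (hR : ∀ s ∈ S, (({s, s⁻¹} : Set G) ∩ R).ncard = 1)
    (i : ℕ) (hi2 : 2 ≤ i) (hiL : i ≤ L)
    (m : ℕ) (hm1 : 1 ≤ m)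
    (hmD : m ≤ quotDiam S (Set.univ : Set G) (commutator G : Set G))
    (s : G) (hs : s ∈ S) (x : Fin (i - 1) → G) (hx : ∀ j, x j ∈ R) :
    (quotLength S (Subgroup.lowerCentralSeries (⊤ : Subgroup G) i : Set G) (rho (s ^ m) (List.ofFn x)) : ℝ) ≤
      (2 : ℝ) ^ (5 * i + 6) * ((2 : ℝ) ^ (2 * i) + (L : ℝ) * (m : ℝ) ^ ((1 : ℝ) / i)) :=
  rho_power_quot_word_length_bound_general G L S R hS hRS i hi2 hiL m s hs x hx

end
end

section
/- Let G be a finite nilpotent group of nilpotency class L and rank r. Then for every i with 1 ≤ i ≤ L, |G_i/G_{i+1}| ≤ |G_ab|^{r^{i−1}}. -/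
open scoped BigOperators
open scoped Classical

noncomputable section

/-! If `N = ⁅A, G⁆` is central, the commutator `⁅a, g⁆` with `a ∈ A` is multiplicative in
each argument and trivial for `a ∈ N`. So, for generators `t₁, …, t_r` of `G`, the range of
the homomorphism `(A/N)^r → Z(G)`, `(aᵢ) ↦ ∏ ⁅aᵢ, tᵢ⁆` contains every `⁅a, tᵢ⁆`, hence
every `⁅a, g⁆`, hence `N`; thus `|N| ≤ |A/N|^r`. Applied in `G ⧸ ⁅N, G⁆` this gives
`|N/⁅N, G⁆| ≤ |A/N|^r` for every normal `A`, and iterating from `A = G` along the lower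
central series gives `|G_{k+1}/G_{k+2}| ≤ |G_ab|^(r^k)`. -/

open scoped commutatorElement IsMulCommutative

namespace Subgroup

variable {G : Type*} [Group G] {A : Subgroup G}

lemma commutatorElement_mem_center (hA : ⁅A, ⊤⁆ ≤ center G) {a : G} (ha : a ∈ A) (g : G) :
    ⁅a, g⁆ ∈ center G :=
  hA (commutator_mem_commutator ha (mem_top g))

lemma conj_eq_self_of_mem_center {z : G} (hz : z ∈ center G) (g : G) : g * z * g⁻¹ = z := by
  rw [mem_center_iff.mp hz g, mul_inv_cancel_right]

def commutatorLeftHom (hA : ⁅A, ⊤⁆ ≤ center G) (g : G) : A →* center G :=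
  MonoidHom.mk' (fun a => ⟨⁅(a : G), g⁆, commutatorElement_mem_center hA a.2 g⟩)
    fun a b => by
      ext
      simp only [coe_mul, commutatorElement_mul_left_eq_conj_mul,
        conj_eq_self_of_mem_center (commutatorElement_mem_center hA b.2 g)]
      exact mem_center_iff.mp (commutatorElement_mem_center hA a.2 g) _

def commutatorRightHom (hA : ⁅A, ⊤⁆ ≤ center G) {a : G} (ha : a ∈ A) : G →* center G :=
  MonoidHom.mk' (fun g => ⟨⁅a, g⁆, commutatorElement_mem_center hA ha g⟩) fun g h => by
    ext
    simp only [coe_mul, commutatorElement_mul_right_eq_mul_conj, mul_assoc]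
    rw [← mul_assoc g, conj_eq_self_of_mem_center (commutatorElement_mem_center hA ha h)]

variable {ι : Type*} [Fintype ι]

def commutatorProdHom [A.Normal] (hA : ⁅A, ⊤⁆ ≤ center G) (t : ι → G) :
    (ι → A ⧸ subgroupOf ⁅A, ⊤⁆ A) →* center G :=
  ∏ i, (QuotientGroup.lift _ (commutatorLeftHom hA (t i)) fun a ha => by
    ext
    exact commutatorElement_eq_one_iff_mul_comm.2 (mem_center_iff.1 (hA ha) (t i)).symm
    ).comp (Pi.evalMonoidHom _ i)

lemma commutatorProdHom_mulSingle [A.Normal] (hA : ⁅A, ⊤⁆ ≤ center G) (t : ι → G) (i : ι)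
    (a : A) : (commutatorProdHom hA t (Pi.mulSingle i a) : G) = ⁅(a : G), t i⁆ := by
  rw [commutatorProdHom, MonoidHom.finsetProd_apply, Fintype.prod_eq_single i]
  · simp only [MonoidHom.comp_apply, Pi.evalMonoidHom_apply, Pi.mulSingle_eq_same]
    rfl
  · intro j hj
    simp [Pi.mulSingle_eq_of_ne hj]

lemma commutator_top_le_map_range_commutatorProdHom [A.Normal] (hA : ⁅A, ⊤⁆ ≤ center G)
    {t : ι → G} (ht : closure (Set.range t) = ⊤) :
    ⁅A, ⊤⁆ ≤ (commutatorProdHom hA t).range.map (center G).subtype := by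
  rw [commutator_le]
  rintro a ha g -
  have hgen : closure (Set.range t) ≤
      (commutatorProdHom hA t).range.comap (commutatorRightHom hA ha) := by
    rw [closure_le]
    rintro _ ⟨i, rfl⟩
    exact ⟨Pi.mulSingle i (⟨a, ha⟩ : A),
      Subtype.ext (commutatorProdHom_mulSingle hA t i ⟨a, ha⟩)⟩
  exact ⟨_, hgen (ht ▸ mem_top g), rfl⟩

lemma card_commutator_top_le [Finite G] [A.Normal] (hA : ⁅A, ⊤⁆ ≤ center G) {t : ι → G}
    (ht : closure (Set.range t) = ⊤) :
    Nat.card (⁅A, ⊤⁆ : Subgroup G) ≤ relIndex ⁅A, ⊤⁆ A ^ Fintype.card ι := by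
  let Ψ := commutatorProdHom hA t
  calc Nat.card (⁅A, ⊤⁆ : Subgroup G) ≤ Nat.card (Ψ.range.map (center G).subtype) :=
        card_le_of_le (commutator_top_le_map_range_commutatorProdHom hA ht)
    _ = Nat.card Ψ.range := card_map_of_injective (center G).subtype_injective
    _ ≤ Nat.card (ι → A ⧸ subgroupOf ⁅A, ⊤⁆ A) :=
        Nat.card_le_card_of_surjective Ψ.rangeRestrict Ψ.rangeRestrict_surjective
    _ = relIndex ⁅A, ⊤⁆ A ^ Fintype.card ι := by
        rw [Nat.card_fun, Nat.card_eq_fintype_card (α := ι)]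
        rfl

lemma relIndex_commutator_commutator_top_le [Finite G] [A.Normal] {t : ι → G}
    (ht : closure (Set.range t) = ⊤) :
    relIndex ⁅(⁅A, ⊤⁆ : Subgroup G), (⊤ : Subgroup G)⁆ ⁅A, ⊤⁆ ≤
      relIndex ⁅A, ⊤⁆ A ^ Fintype.card ι := by
  set N : Subgroup G := ⁅A, ⊤⁆
  set M : Subgroup G := ⁅N, ⊤⁆
  let π := QuotientGroup.mk' M
  have hπ : Function.Surjective π := QuotientGroup.mk'_surjective M
  have hmap : (⁅A.map π, ⊤⁆ : Subgroup (G ⧸ M)) = N.map π := by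
    rw [map_commutator, map_top_of_surjective π hπ]
  have : (A.map π).Normal := Normal.map ‹_› π hπ
  have hcentral : ⁅A.map π, ⊤⁆ ≤ center (G ⧸ M) := by
    rw [hmap, ← centralizer_univ, ← coe_top, ← commutator_eq_bot_iff_le_centralizer,
      ← map_top_of_surjective π hπ, ← map_commutator, QuotientGroup.map_mk'_self]
  have hπt : closure (Set.range (π ∘ t)) = ⊤ := by
    rw [Set.range_comp, ← MonoidHom.map_closure, ht, map_top_of_surjective π hπ]
  calc M.relIndex N = Nat.card (N.map π) := by rw [← relIndex_ker, QuotientGroup.ker_mk']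
    _ ≤ (N.map π).relIndex (A.map π) ^ Fintype.card ι :=
        hmap ▸ card_commutator_top_le hcentral hπt
    _ = N.relIndex A ^ Fintype.card ι := by
        rw [relIndex_map_map, QuotientGroup.ker_mk', sup_eq_left.2 (commutator_le_left N ⊤),
          sup_eq_left.2 ((commutator_le_left N ⊤).trans (commutator_le_left A ⊤))]

lemma relIndex_lowerCentralSeries_succ_le [Finite G] {t : ι → G}
    (ht : closure (Set.range t) = ⊤) (k : ℕ) :
    relIndex ((⊤ : Subgroup G).lowerCentralSeries (k + 1))
        ((⊤ : Subgroup G).lowerCentralSeries k) ≤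
      (_root_.commutator G).index ^ (Fintype.card ι ^ k) := by
  induction k with
  | zero =>
    rw [zero_add, top_lowerCentralSeries_one, lowerCentralSeries_zero, relIndex_top_right,
      pow_zero, pow_one]
  | succ k ih =>
    calc _ ≤ relIndex ((⊤ : Subgroup G).lowerCentralSeries (k + 1))
            ((⊤ : Subgroup G).lowerCentralSeries k) ^ Fintype.card ι :=
          relIndex_commutator_commutator_top_le ht
      _ ≤ ((_root_.commutator G).index ^ (Fintype.card ι ^ k)) ^ Fintype.card ι :=
          Nat.pow_le_pow_left ih _
      _ = (_root_.commutator G).index ^ (Fintype.card ι ^ (k + 1)) := by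
          rw [← pow_mul, pow_succ]

end Subgroup

theorem quotient_card_le_ab_pow_general (G : Type*) [Group G] [Fintype G] (r : ℕ)
    (hr : HasRank G r)
    (i : ℕ) (hi1 : 1 ≤ i) :
    (Subgroup.lowerCentralSeries (⊤ : Subgroup G) i).relIndex
      (Subgroup.lowerCentralSeries (⊤ : Subgroup G) (i - 1)) ≤
      (commutator G).index ^ (r ^ (i - 1)) := by
  obtain ⟨⟨T, rfl, hT⟩, -⟩ := hr
  have hT' : Subgroup.closure (Set.range ((↑) : T → G)) = ⊤ := by
    rw [Subgroup.closure_union, Subgroup.closure_inv, sup_idem] at hT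
    rwa [Subtype.range_coe_subtype]
  obtain ⟨k, rfl⟩ := Nat.exists_eq_add_of_le' hi1
  simpa using Subgroup.relIndex_lowerCentralSeries_succ_le hT' k

/-- Corollary `ab_size`, first part: `|G_i/G_{i+1}| ≤ |G_ab|^{r^{i-1}}`,
where `|G_i/G_{i+1}|` is the relative index of `G_{i+1}` in `G_i` and `|G_ab|` is the index of
the commutator subgroup. -/
theorem quotient_card_le_ab_pow (G : Type*) [Group G] [Fintype G] (L r : ℕ)
    (hL : NilpotencyClassEq G L) (hr : HasRank G r)
    (i : ℕ) (hi1 : 1 ≤ i) (hiL : i ≤ L) :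
    (Subgroup.lowerCentralSeries (⊤ : Subgroup G) i).relIndex
      (Subgroup.lowerCentralSeries (⊤ : Subgroup G) (i - 1)) ≤
      (commutator G).index ^ (r ^ (i - 1)) :=
  quotient_card_le_ab_pow_general G r hr i hi1

end
end

section
/- Let n ≥ 1 and α ≥ 1 be integers and p a prime. Then (1/p^{α(n+2)}) · ∑_{u ∈ (ℤ/p^αℤ)^{n+2}} ( p^α / |⟨u₁, …, u_{n+2}⟩| )^n ≤ exp( 1/(p² − 1) ), where ⟨u₁, …, u_{n+2}⟩ denotes the additive subgroup of ℤ/p^αℤ generated by the coordinates u₁, …, u_{n+2} of u, and the left-hand side is the expectation of ( |ℤ/p^αℤ| / |⟨U₁,…,U_{n+2}⟩| )^n for U₁, …, U_{n+2} independent and uniform on ℤ/p^αℤ. -/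
open scoped BigOperators
open scoped Classical

noncomputable section

/-
If `H = ⟨u₁, …, u_m⟩ ≤ ℤ/Nℤ` has index `d`, then `|H| • uᵢ = 0` and `|H| · d = N` force
`d ∣ uᵢ` for every `i`. Hence `[ℤ/Nℤ : H]ⁿ ≤ ∑_{d ∣ N} dⁿ · 1[d ∣ uᵢ for all i]`, and since
exactly `(N/d)^m` tuples are divisible by `d`, summing over `u` gives at most
`∑_{d ∣ N} dⁿ (N/d)^m = N^m ∑_{d ∣ N} d⁻²` when `m = n + 2`. For `N = p^α` the last sum is a
geometric series bounded by `1 / (1 - p⁻²) = 1 + 1/(p² - 1) ≤ exp (1/(p² - 1))`.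
-/

open Finset

namespace ZMod

variable {N : ℕ} [NeZero N]

theorem index_dvd_val_of_mem {H : AddSubgroup (ZMod N)} {x : ZMod N} (hx : x ∈ H) :
    H.index ∣ x.val := by
  have hcard_smul : ((Nat.card H * x.val : ℕ) : ZMod N) = 0 := by
    rw [Nat.cast_mul, natCast_zmod_val, ← nsmul_eq_mul]
    exact congrArg Subtype.val (card_nsmul_eq_zero' (x := (⟨x, hx⟩ : H)))
  have hN : Nat.card H * H.index = N := by rw [H.card_mul_index, Nat.card_zmod]
  rw [natCast_eq_zero_iff] at hcard_smul
  exact Nat.dvd_of_mul_dvd_mul_left Nat.card_pos ((dvd_of_eq hN).trans hcard_smul)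

theorem card_filter_dvd_val {d : ℕ} (hd : d ∣ N) : #{x : ZMod N | d ∣ x.val} = N / d := by
  have hd0 : 0 < d := Nat.pos_of_dvd_of_pos hd (Nat.pos_of_ne_zero (NeZero.ne N))
  have hmul : d * (N / d) = N := Nat.mul_div_cancel' hd
  rw [← card_range (N / d)]
  refine card_nbij' (fun x => x.val / d) (fun k => ((d * k : ℕ) : ZMod N)) ?_ ?_ ?_ ?_
  · intro x _
    simpa using Nat.div_lt_of_lt_mul (by rw [hmul]; exact val_lt x)
  · intro k hk
    have : d * k < N := hmul ▸ Nat.mul_lt_mul_of_pos_left (by simpa using hk) hd0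
    simp [-Nat.cast_mul, val_natCast_of_lt this]
  · intro x hx
    simp_all [Nat.mul_div_cancel']
  · intro k hk
    have : d * k < N := hmul ▸ Nat.mul_lt_mul_of_pos_left (by simpa using hk) hd0
    simp [-Nat.cast_mul, val_natCast_of_lt this, hd0]

variable {ι : Type*} [Fintype ι]

theorem card_filter_forall_dvd_val [DecidableEq ι] {d : ℕ} (hd : d ∣ N) :
    #{u : ι → ZMod N | ∀ i, d ∣ (u i).val} = (N / d) ^ Fintype.card ι := by
  have : ({u : ι → ZMod N | ∀ i, d ∣ (u i).val} : Finset _) =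
      Fintype.piFinset fun _ => {x : ZMod N | d ∣ x.val} := by
    ext u; simp
  rw [this, Fintype.card_piFinset, prod_const, card_filter_dvd_val hd, card_univ]

theorem index_closure_pow_le_sum_divisors (n : ℕ) (u : ι → ZMod N) :
    (AddSubgroup.closure (Set.range u)).index ^ n ≤
      ∑ d ∈ N.divisors, if ∀ i, d ∣ (u i).val then d ^ n else 0 := by
  set H := AddSubgroup.closure (Set.range u)
  have hmem : H.index ∈ N.divisors :=
    Nat.mem_divisors.2 ⟨H.index_dvd_card.trans (Nat.card_zmod N).dvd, NeZero.ne N⟩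
  have hdvd : ∀ i, H.index ∣ (u i).val :=
    fun i => index_dvd_val_of_mem (AddSubgroup.subset_closure (Set.mem_range_self i))
  calc H.index ^ n = if ∀ i, H.index ∣ (u i).val then H.index ^ n else 0 := (if_pos hdvd).symm
    _ ≤ _ := single_le_sum (f := fun d => if ∀ i, d ∣ (u i).val then d ^ n else 0)
        (fun _ _ => Nat.zero_le _) hmem

theorem sum_index_closure_pow_le [DecidableEq ι] (n : ℕ) :
    ∑ u : ι → ZMod N, (AddSubgroup.closure (Set.range u)).index ^ n ≤
      ∑ d ∈ N.divisors, d ^ n * (N / d) ^ Fintype.card ι :=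
  calc ∑ u : ι → ZMod N, (AddSubgroup.closure (Set.range u)).index ^ n
      ≤ ∑ u : ι → ZMod N, ∑ d ∈ N.divisors, if ∀ i, d ∣ (u i).val then d ^ n else 0 :=
        sum_le_sum fun u _ => index_closure_pow_le_sum_divisors n u
    _ = ∑ d ∈ N.divisors, d ^ n * (N / d) ^ Fintype.card ι := by
        rw [sum_comm]
        refine sum_congr rfl fun d hd => ?_
        rw [← sum_filter, sum_const, card_filter_forall_dvd_val (Nat.dvd_of_mem_divisors hd),
          smul_eq_mul, mul_comm]

end ZMod

theorem Nat.cast_pow_mul_div_pow_add_two {N d : ℕ} (hd : d ∈ N.divisors) (n : ℕ) :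
    ((d ^ n * (N / d) ^ (n + 2) : ℕ) : ℝ) = (N : ℝ) ^ (n + 2) * ((d : ℝ) ^ 2)⁻¹ := by
  have hd0 : (d : ℝ) ≠ 0 := Nat.cast_ne_zero.2 (Nat.pos_of_mem_divisors hd).ne'
  rw [Nat.cast_mul, Nat.cast_pow, Nat.cast_pow, Nat.cast_div (Nat.dvd_of_mem_divisors hd) hd0,
    div_pow, pow_add (d : ℝ)]
  field_simp

theorem one_div_one_sub_inv_eq {q : ℝ} (hq : 1 < q) : 1 / (1 - q⁻¹) = 1 + 1 / (q - 1) := by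
  have : q - 1 ≠ 0 := sub_ne_zero.2 hq.ne'
  field_simp
  ring

theorem Nat.Prime.sum_divisors_pow_inv_sq_le {p : ℕ} (hp : p.Prime) (α : ℕ) :
    ∑ d ∈ (p ^ α).divisors, ((d : ℝ) ^ 2)⁻¹ ≤ Real.exp (1 / ((p : ℝ) ^ 2 - 1)) := by
  have hq : 1 < (p : ℝ) ^ 2 := one_lt_pow₀ (Nat.one_lt_cast.2 hp.one_lt) two_ne_zero
  have hr : ((p : ℝ) ^ 2)⁻¹ < 1 := inv_lt_one_of_one_lt₀ hq
  calc ∑ d ∈ (p ^ α).divisors, ((d : ℝ) ^ 2)⁻¹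
      = ∑ j ∈ Ico 0 (α + 1), ((p : ℝ) ^ 2)⁻¹ ^ j := by
        rw [Nat.sum_divisors_prime_pow hp, Nat.Ico_zero_eq_range]
        simp [← pow_mul, mul_comm]
    _ ≤ 1 / (1 - ((p : ℝ) ^ 2)⁻¹) := by
        simpa using geom_sum_Ico_le_of_lt_one (m := 0) (n := α + 1) (by positivity) hr
    _ = 1 / ((p : ℝ) ^ 2 - 1) + 1 := by rw [one_div_one_sub_inv_eq hq, add_comm]
    _ ≤ Real.exp (1 / ((p : ℝ) ^ 2 - 1)) := Real.add_one_le_exp _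

theorem iid_generation_expectation_general (n α : ℕ)
    (p : ℕ) (hp : p.Prime) :
    haveI : NeZero (p ^ α) := ⟨pow_ne_zero _ hp.ne_zero⟩
    (1 / (p : ℝ) ^ (α * (n + 2))) *
        ∑ u : Fin (n + 2) → ZMod (p ^ α),
          ((p : ℝ) ^ α / (Nat.card (↥(AddSubgroup.closure (Set.range u))) : ℝ)) ^ n ≤
      Real.exp (1 / ((p : ℝ) ^ 2 - 1)) := by
  have : NeZero (p ^ α) := ⟨pow_ne_zero _ hp.ne_zero⟩
  have hindex : ∀ H : AddSubgroup (ZMod (p ^ α)), (p : ℝ) ^ α / Nat.card H = H.index := by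
    intro H
    rw [eq_comm, eq_div_iff (Nat.cast_ne_zero.2 Nat.card_pos.ne'), mul_comm, ← Nat.cast_mul,
      H.card_mul_index, Nat.card_zmod, Nat.cast_pow]
  have hN : (0 : ℝ) < (p : ℝ) ^ (α * (n + 2)) := pow_pos (Nat.cast_pos.2 hp.pos) _
  simp_rw [hindex]
  calc 1 / (p : ℝ) ^ (α * (n + 2)) * ∑ u : Fin (n + 2) → ZMod (p ^ α),
        ((AddSubgroup.closure (Set.range u)).index : ℝ) ^ n
      ≤ 1 / (p : ℝ) ^ (α * (n + 2)) *
          ∑ d ∈ (p ^ α).divisors, ((d ^ n * (p ^ α / d) ^ (n + 2) : ℕ) : ℝ) := by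
        gcongr
        exact_mod_cast Fintype.card_fin (n + 2) ▸ ZMod.sum_index_closure_pow_le n
    _ = ∑ d ∈ (p ^ α).divisors, ((d : ℝ) ^ 2)⁻¹ := by
        rw [sum_congr rfl fun d hd => Nat.cast_pow_mul_div_pow_add_two hd n, ← mul_sum, Nat.cast_pow,
          ← pow_mul, one_div, inv_mul_cancel_left₀ hN.ne']
    _ ≤ Real.exp (1 / ((p : ℝ) ^ 2 - 1)) := hp.sum_divisors_pow_inv_sq_le α

/-- Lemma `iid_generation`: for `U₁,…,U_{n+2}` i.i.d. uniform on `ℤ/p^αℤ`,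
`𝔼[(|ℤ/p^αℤ|/|⟨U₁,…,U_{n+2}⟩|)^n] ≤ exp(1/(p²-1))`. -/
theorem iid_generation_expectation (n α : ℕ) (hn : 1 ≤ n) (hα : 1 ≤ α)
    (p : ℕ) (hp : p.Prime) :
    haveI : NeZero (p ^ α) := ⟨pow_ne_zero _ hp.ne_zero⟩
    (1 / (p : ℝ) ^ (α * (n + 2))) *
        ∑ u : Fin (n + 2) → ZMod (p ^ α),
          ((p : ℝ) ^ α / (Nat.card (↥(AddSubgroup.closure (Set.range u))) : ℝ)) ^ n ≤
      Real.exp (1 / ((p : ℝ) ^ 2 - 1)) :=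
  iid_generation_expectation_general n α p hp

end
end

section
/- Let n ∈ ℕ and let p be a prime. Then for every residue class x ∈ ℤ/pℤ, ∑_{k=0}^{n, k ≡ x mod p} C(n,k)/2^n ≤ min{2/p, 1/2} + q(n), where the sum is over those 0 ≤ k ≤ n whose image in ℤ/pℤ is x, C(n,k) is the binomial coefficient, and q(n) := max_{0 ≤ j ≤ n} C(n,j)/2^n. Equivalently, if S_n is a Binomial(n, 1/2) random variable, then max_{x ∈ ℤ} P(S_n ≡ x mod p) ≤ min{2/p, 1/2} + max_{j ∈ ℤ} P(S_n = j). -/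
open scoped BigOperators
open scoped Classical

noncomputable section

/-!
Layer-cake argument: write `∑ₖ f k = ∑ₜ #{k | t < f k}`. For a unimodal sequence such as
`k ↦ C(n,k)` every level set `{k | t < f k}` is an interval, and an interval of length `L`
contains at most `(L + p - 1) / p` points of a residue class mod `p`. Summing over the `M`
levels, with `M` the largest value, gives `p · ∑_{k ≡ r} C(n,k) ≤ 2ⁿ + (p - 1) M`, and
`1/p ≤ min (2/p) (1/2)` since `p ≥ 2`.
-/

open Finset

theorem Finset.sum_eq_sum_range_card_filter_lt {ι : Type*} (s : Finset ι) (f : ι → ℕ) {M : ℕ}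
    (hM : ∀ k ∈ s, f k ≤ M) : ∑ k ∈ s, f k = ∑ t ∈ range M, #{k ∈ s | t < f k} := by
  have hslice : ∀ k ∈ s, f k = #{t ∈ range M | t < f k} := fun k hk => by
    have hrange : {t ∈ range M | t < f k} = range (f k) := by
      ext t
      simp only [mem_filter, mem_range]
      have := hM k hk
      omega
    rw [hrange, card_range]
  rw [sum_congr rfl hslice]
  exact sum_card_bipartiteAbove_eq_sum_card_bipartiteBelow _

theorem Finset.mul_card_filter_modEq_le {s : Finset ℕ} (hs : (s : Set ℕ).OrdConnected)
    (p r : ℕ) : p * #{k ∈ s | k ≡ r [MOD p]} ≤ #s + (p - 1) := by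
  rcases s.eq_empty_or_nonempty with rfl | hne
  · simp
  set A := {k ∈ s | k ≡ r [MOD p]}
  set b := s.max' hne
  have hmaps : ∀ x ∈ A ×ˢ range p, x.1 + x.2 ∈ s ∪ Ioo b (b + p) := by
    rintro ⟨k, i⟩ hx
    simp only [A, mem_product, mem_filter, mem_range] at hx
    have hkb : k ≤ b := s.le_max' k hx.1.1
    rcases le_or_gt (k + i) b with hle | hlt
    · exact mem_union_left _ (hs.out hx.1.1 (s.max'_mem hne) ⟨by omega, hle⟩)
    · exact mem_union_right _ (mem_Ioo.mpr ⟨hlt, by omega⟩)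
  have hinj : Set.InjOn (fun x : ℕ × ℕ => x.1 + x.2) ↑(A ×ˢ range p) := by
    rintro ⟨k, i⟩ hx ⟨k', i'⟩ hx' (heq : k + i = k' + i')
    simp only [A, coe_product, coe_filter, coe_range, Set.mem_prod, Set.mem_ofPred_eq,
      Set.mem_Iio] at hx hx'
    have hi : i ≡ i' [MOD p] :=
      Nat.ModEq.add_left_cancel' k (heq ▸ (hx'.1.2.trans hx.1.2.symm).add_right i')
    have : i = i' := by
      rwa [Nat.ModEq, Nat.mod_eq_of_lt hx.2, Nat.mod_eq_of_lt hx'.2] at hi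
    simp only [Prod.mk.injEq]
    omega
  calc p * #A = #(A ×ˢ range p) := by rw [card_product, card_range, mul_comm]
    _ ≤ #(s ∪ Ioo b (b + p)) := card_le_card_of_injOn _ hmaps hinj
    _ ≤ #s + (p - 1) := by
        refine (card_union_le _ _).trans ?_
        rw [Nat.card_Ioo]
        omega

def Unimodal (f : ℕ → ℕ) : Prop :=
  ∀ ⦃i j l : ℕ⦄, i ≤ j → j ≤ l → min (f i) (f l) ≤ f j

theorem Unimodal.ordConnected_filter_lt {f : ℕ → ℕ} (hf : Unimodal f) {s : Finset ℕ}
    (hs : (s : Set ℕ).OrdConnected) (t : ℕ) : (↑{k ∈ s | t < f k} : Set ℕ).OrdConnected := by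
  refine ⟨fun i hi l hl j hj => ?_⟩
  simp only [coe_filter, Set.mem_ofPred_eq] at hi hl ⊢
  exact ⟨hs.out hi.1 hl.1 hj, (lt_min hi.2 hl.2).trans_le (hf hj.1 hj.2)⟩

theorem Unimodal.mul_sum_filter_modEq_le {f : ℕ → ℕ} (hf : Unimodal f) {s : Finset ℕ}
    (hs : (s : Set ℕ).OrdConnected) {M : ℕ} (hM : ∀ k ∈ s, f k ≤ M) (p r : ℕ) :
    p * ∑ k ∈ s with k ≡ r [MOD p], f k ≤ ∑ k ∈ s, f k + (p - 1) * M := by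
  calc p * ∑ k ∈ s with k ≡ r [MOD p], f k
      = ∑ t ∈ range M, p * #{k ∈ {k ∈ s | t < f k} | k ≡ r [MOD p]} := by
        rw [sum_eq_sum_range_card_filter_lt _ _ fun k hk => hM k (mem_filter.1 hk).1, mul_sum]
        simp only [filter_filter, and_comm]
    _ ≤ ∑ t ∈ range M, (#{k ∈ s | t < f k} + (p - 1)) :=
        sum_le_sum fun t _ => mul_card_filter_modEq_le (hf.ordConnected_filter_lt hs t) p r
    _ = ∑ k ∈ s, f k + (p - 1) * M := by
        rw [sum_add_distrib, ← sum_eq_sum_range_card_filter_lt _ _ hM, sum_const, card_range,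
          smul_eq_mul, mul_comm]

theorem Nat.monotoneOn_choose_Iic_half (n : ℕ) : MonotoneOn n.choose (Set.Iic (n / 2)) :=
  monotoneOn_of_le_add_one Set.ordConnected_Iic fun _ _ _ hsucc =>
    Nat.choose_le_succ_of_lt_half_left (Nat.lt_of_succ_le hsucc)

theorem Nat.unimodal_choose (n : ℕ) : Unimodal n.choose := by
  intro i j l hij hjl
  rcases le_or_gt j (n / 2) with hj | hj
  · exact min_le_of_left_le
      (Nat.monotoneOn_choose_Iic_half n (hij.trans hj : i ≤ n / 2) hj hij)
  rcases le_or_gt l n with hl | hl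
  · refine min_le_of_right_le ?_
    rw [← Nat.choose_symm hl, ← Nat.choose_symm (hjl.trans hl)]
    exact Nat.monotoneOn_choose_Iic_half n (by simp only [Set.mem_Iic]; omega)
      (by simp only [Set.mem_Iic]; omega) (by omega)
  · simp [Nat.choose_eq_zero_of_lt hl]

theorem Nat.mul_sum_choose_filter_modEq_le (n p r : ℕ) :
    p * ∑ k ∈ range (n + 1) with k ≡ r [MOD p], n.choose k ≤
      2 ^ n + (p - 1) * (range (n + 1)).sup n.choose := by
  rw [← Nat.sum_range_choose]
  refine (Nat.unimodal_choose n).mul_sum_filter_modEq_le ?_ (fun k hk => le_sup hk) p r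
  rw [coe_range]
  exact Set.ordConnected_Iio

/-- Lemma `lazyRW_modp`: for a Binomial(n,1/2) random variable `S_n` and a
prime `p`, `max_x P(S_n ≡ x mod p) ≤ min{2/p, 1/2} + max_j P(S_n = j)`. -/
theorem binomial_mod_p_bound (n p : ℕ) (hp : p.Prime) (x : ZMod p) :
    (∑ k ∈ (Finset.range (n + 1)).filter (fun k : ℕ => ((k : ZMod p) = x)),
        (n.choose k : ℝ)) / 2 ^ n ≤
      min (2 / (p : ℝ)) (1 / 2) +
        (((Finset.range (n + 1)).sup (n.choose) : ℕ) : ℝ) / 2 ^ n := by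
  have hp2 : (2 : ℝ) ≤ p := by exact_mod_cast hp.two_le
  have : NeZero p := ⟨hp.ne_zero⟩
  have hfilter : (range (n + 1)).filter (fun k : ℕ => (k : ZMod p) = x) =
      {k ∈ range (n + 1) | k ≡ x.val [MOD p]} :=
    filter_congr fun k _ => by rw [← ZMod.natCast_eq_natCast_iff, ZMod.natCast_zmod_val]
  set S := ∑ k ∈ range (n + 1) with k ≡ x.val [MOD p], n.choose k
  set M := (range (n + 1)).sup n.choose
  have hkey : (p : ℝ) * S ≤ 2 ^ n + p * M := by
    exact_mod_cast (Nat.mul_sum_choose_filter_modEq_le n p x.val).trans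
      (by gcongr; exact Nat.sub_le p 1)
  have hmin : 1 / (p : ℝ) ≤ min (2 / (p : ℝ)) (1 / 2) :=
    le_min (by gcongr; norm_num) (one_div_le_one_div_of_le two_pos hp2)
  rw [hfilter, ← Nat.cast_sum]
  calc (S : ℝ) / 2 ^ n ≤ 1 / (p : ℝ) + M / 2 ^ n := by
        rw [div_add_div _ _ (by positivity) (by positivity), div_le_div_iff₀ (by positivity)
          (by positivity)]
        nlinarith [pow_pos (two_pos : (0 : ℝ) < 2) n]
    _ ≤ min (2 / (p : ℝ)) (1 / 2) + M / 2 ^ n := by gcongr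

end
end
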